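/- Let G be any graph of order n and let H be any graph with a distinguished root vertex v. Then n·γ_oir2(H) − α(G) ≤ γ_oir2(G ∘_v H) ≤ n·γ_oir2(H) + β(G), where G ∘_v H is the rooted product, α(G) is the independence number of G, and β(G) is the vertex cover number of G. -/

import Mathlib

/-- `f` is an outer-independent 2-rainbow dominating function of `G`. -/
def IsOI2RD {V : Type*} (G : SimpleGraph V) (f : V → Finset (Fin 2)) : Prop :=
  (∀ v, f v = ∅ → ∀ c : Fin 2, ∃ u, G.Adj v u ∧ c ∈ f u) ∧
  (∀ u w, f u = ∅ → f w = ∅ → ¬ G.Adj u w)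

/-- The outer-independent 2-rainbow domination number of `G`. -/
noncomputable def oir2 {V : Type*} [Fintype V] (G : SimpleGraph V) : ℕ :=
  sInf {w | ∃ f : V → Finset (Fin 2), IsOI2RD G f ∧ w = ∑ v, (f v).card}

/-- The independence number `α(G)`. -/
noncomputable def alphaNum {V : Type*} [Fintype V] (G : SimpleGraph V) : ℕ :=
  sSup {k | ∃ s : Finset V, (∀ u ∈ s, ∀ w ∈ s, ¬ G.Adj u w) ∧ s.card = k}

/-- The vertex cover number `β(G)`. -/
noncomputable def betaNum {V : Type*} [Fintype V] (G : SimpleGraph V) : ℕ :=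
  sInf {k | ∃ s : Finset V, (∀ u w, G.Adj u w → u ∈ s ∨ w ∈ s) ∧ s.card = k}

/-- The rooted product `G ∘ᵥ H` with root `v : V(H)`: one copy of `H` for each
vertex of `G`, with the roots of the copies joined according to `G`. -/
def rootedProd {α β : Type*} (G : SimpleGraph α) (H : SimpleGraph β) (v : β) :
    SimpleGraph (α × β) where
  Adj x y := (x.1 = y.1 ∧ H.Adj x.2 y.2) ∨ (x.2 = v ∧ y.2 = v ∧ G.Adj x.1 y.1)
  symm := by
    constructor
    rintro x y (⟨h1, h2⟩ | ⟨h1, h2, h3⟩)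
    · exact Or.inl ⟨h1.symm, h2.symm⟩
    · exact Or.inr ⟨h2, h1, h3.symm⟩
  loopless := by
    constructor
    rintro x (⟨-, h⟩ | ⟨-, -, h⟩)
    · exact H.irrefl h
    · exact G.irrefl h

lemma oir2_le' {V : Type*} [Fintype V] (G : SimpleGraph V) (f : V → Finset (Fin 2))
    (h : IsOI2RD G f) : oir2 G ≤ ∑ v, (f v).card :=
  Nat.sInf_le ⟨f, h, rfl⟩

lemma exists_oir2 {V : Type*} [Fintype V] (G : SimpleGraph V) :
    ∃ f : V → Finset (Fin 2), IsOI2RD G f ∧ oir2 G = ∑ v, (f v).card := by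
  have hne : {w | ∃ f : V → Finset (Fin 2), IsOI2RD G f ∧ w = ∑ v, (f v).card}.Nonempty := by
    refine ⟨_, fun _ => (Finset.univ : Finset (Fin 2)), ⟨?_, ?_⟩, rfl⟩
    · intro v hv
      exact absurd hv Finset.univ_nonempty.ne_empty
    · intro u w hu
      exact absurd hu Finset.univ_nonempty.ne_empty
  exact Nat.sInf_mem hne

lemma card_le_alphaNum {V : Type*} [Fintype V] (G : SimpleGraph V) (s : Finset V)
    (hs : ∀ u ∈ s, ∀ w ∈ s, ¬ G.Adj u w) : s.card ≤ alphaNum G := by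
  refine le_csSup ⟨Fintype.card V, ?_⟩ ⟨s, hs, rfl⟩
  rintro k ⟨t, -, rfl⟩
  exact t.card_le_univ

lemma exists_betaNum {V : Type*} [Fintype V] (G : SimpleGraph V) :
    ∃ s : Finset V, (∀ u w, G.Adj u w → u ∈ s ∨ w ∈ s) ∧ betaNum G = s.card := by
  have hne : {k | ∃ s : Finset V, (∀ u w, G.Adj u w → u ∈ s ∨ w ∈ s) ∧ s.card = k}.Nonempty :=
    ⟨_, Finset.univ, fun u w _ => Or.inl (Finset.mem_univ u), rfl⟩
  obtain ⟨s, hs, hcard⟩ := Nat.sInf_mem hne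
  exact ⟨s, hs, hcard.symm⟩

theorem oir2_rootedProd_bounds
    {α β : Type*} [Fintype α] [Fintype β]
    (G : SimpleGraph α) (H : SimpleGraph β) (v : β) :
    (Fintype.card α : ℤ) * oir2 H - alphaNum G ≤ (oir2 (rootedProd G H v) : ℤ) ∧
    (oir2 (rootedProd G H v) : ℤ) ≤ (Fintype.card α : ℤ) * oir2 H + betaNum G := by
  classical
  constructor
  · -- lower bound
    obtain ⟨g, hg, hgw⟩ := exists_oir2 (rootedProd G H v)
    set S : Finset α := Finset.univ.filter (fun a => g (a, v) = ∅) with hS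
    have hSind : ∀ a ∈ S, ∀ a' ∈ S, ¬ G.Adj a a' := by
      intro a ha a' ha' hadj
      simp only [hS, Finset.mem_filter] at ha ha'
      exact hg.2 (a, v) (a', v) ha.2 ha'.2 (Or.inr ⟨rfl, rfl, hadj⟩)
    have hSα : S.card ≤ alphaNum G := card_le_alphaNum G S hSind
    have key : ∀ a : α,
        oir2 H ≤ (∑ b, (g (a, b)).card) + (if g (a, v) = ∅ then 1 else 0) := by
      intro a
      set fa : β → Finset (Fin 2) :=
        fun b => if b = v ∧ g (a, v) = ∅ then {0} else g (a, b) with hfa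
      have hempty : ∀ b, fa b = ∅ → g (a, b) = ∅ := by
        intro b hb
        simp only [hfa] at hb
        by_cases h : b = v ∧ g (a, v) = ∅
        · rw [if_pos h] at hb; simp at hb
        · rwa [if_neg h] at hb
      have hfa_oi : IsOI2RD H fa := by
        constructor
        · intro b hb c
          have hgb : g (a, b) = ∅ := hempty b hb
          have hbv : b ≠ v := by
            intro h
            have hx : fa b = {0} := by
              simp only [hfa]
              rw [if_pos ⟨h, h ▸ hgb⟩]
            rw [hb] at hx
            exact (Finset.singleton_ne_empty (0 : Fin 2)) hx.symm
          obtain ⟨u, hu, hc⟩ := hg.1 (a, b) hgb c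
          obtain ⟨u1, u2⟩ := u
          rcases hu with ⟨h1, h2⟩ | ⟨h1, -, -⟩
          · simp only at h1 h2
            subst h1
            refine ⟨u2, h2, ?_⟩
            simp only [hfa]
            by_cases h : u2 = v ∧ g (a, v) = ∅
            · exfalso; rw [h.1, h.2] at hc; simp at hc
            · rwa [if_neg h]
          · exact absurd h1 hbv
        · intro b b' hb hb' hadj
          exact hg.2 (a, b) (a, b') (hempty b hb) (hempty b' hb')
            (Or.inl ⟨rfl, hadj⟩)
      have hpt : ∀ b, (fa b).card ≤
          (g (a, b)).card + (if b = v ∧ g (a, v) = ∅ then 1 else 0) := by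
        intro b
        simp only [hfa]
        split_ifs with h
        · rw [h.1, h.2]; simp
        · simp
      calc oir2 H ≤ ∑ b, (fa b).card := oir2_le' H fa hfa_oi
        _ ≤ ∑ b, ((g (a, b)).card + (if b = v ∧ g (a, v) = ∅ then 1 else 0)) :=
            Finset.sum_le_sum (fun b _ => hpt b)
        _ = (∑ b, (g (a, b)).card) +
            ∑ b, (if b = v ∧ g (a, v) = ∅ then 1 else 0) := Finset.sum_add_distrib
        _ = (∑ b, (g (a, b)).card) + (if g (a, v) = ∅ then 1 else 0) := by
            congr 1
            by_cases hP : g (a, v) = ∅ <;> simp [hP, Finset.sum_ite_eq']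
    have hmain : Fintype.card α * oir2 H ≤ oir2 (rootedProd G H v) + S.card := by
      calc Fintype.card α * oir2 H = ∑ _a : α, oir2 H := by
            rw [Finset.sum_const, smul_eq_mul, Finset.card_univ]
        _ ≤ ∑ a : α, ((∑ b, (g (a, b)).card) + (if g (a, v) = ∅ then 1 else 0)) :=
            Finset.sum_le_sum (fun a _ => key a)
        _ = (∑ a : α, ∑ b, (g (a, b)).card) +
            ∑ a : α, (if g (a, v) = ∅ then 1 else 0) := Finset.sum_add_distrib
        _ = oir2 (rootedProd G H v) + S.card := by
            congr 1
            · rw [hgw, Fintype.sum_prod_type]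
            · rw [hS, Finset.card_filter]
    have h1 : ((Fintype.card α * oir2 H : ℕ) : ℤ) ≤
        (oir2 (rootedProd G H v) : ℤ) + (S.card : ℤ) := by exact_mod_cast hmain
    have h2 : ((S.card : ℕ) : ℤ) ≤ (alphaNum G : ℤ) := by exact_mod_cast hSα
    push_cast at h1
    linarith
  · -- upper bound
    obtain ⟨f, hf, hfw⟩ := exists_oir2 H
    obtain ⟨s, hs, hsc⟩ := exists_betaNum G
    set g2 : α × β → Finset (Fin 2) :=
      fun p => (f p.2) ∪ (if p.2 = v ∧ p.1 ∈ s then {0} else ∅) with hg2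
    have hemp : ∀ p : α × β, g2 p = ∅ → f p.2 = ∅ ∧ ¬ (p.2 = v ∧ p.1 ∈ s) := by
      intro p hp
      simp only [hg2, Finset.union_eq_empty] at hp
      refine ⟨hp.1, fun h => ?_⟩
      have := hp.2
      rw [if_pos h] at this
      simp at this
    have hg2_oi : IsOI2RD (rootedProd G H v) g2 := by
      constructor
      · intro p hp c
        obtain ⟨hfp, -⟩ := hemp p hp
        obtain ⟨u, hu, hc⟩ := hf.1 p.2 hfp c
        refine ⟨(p.1, u), Or.inl ⟨rfl, hu⟩, ?_⟩
        simp only [hg2]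
        exact Finset.mem_union_left _ hc
      · intro p q hp hq hadj
        obtain ⟨hfp, hps⟩ := hemp p hp
        obtain ⟨hfq, hqs⟩ := hemp q hq
        rcases hadj with ⟨-, h2⟩ | ⟨hpv, hqv, hG⟩
        · exact hf.2 p.2 q.2 hfp hfq h2
        · rcases hs p.1 q.1 hG with h | h
          · exact hps ⟨hpv, h⟩
          · exact hqs ⟨hqv, h⟩
    have hpt : ∀ p : α × β, (g2 p).card ≤
        (f p.2).card + (if p.2 = v ∧ p.1 ∈ s then 1 else 0) := by
      intro p
      simp only [hg2]
      refine (Finset.card_union_le _ _).trans ?_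
      gcongr
      split_ifs <;> simp
    have hmain : oir2 (rootedProd G H v) ≤ Fintype.card α * oir2 H + betaNum G := by
      calc oir2 (rootedProd G H v) ≤ ∑ p : α × β, (g2 p).card :=
            oir2_le' _ g2 hg2_oi
        _ ≤ ∑ p : α × β, ((f p.2).card + (if p.2 = v ∧ p.1 ∈ s then 1 else 0)) :=
            Finset.sum_le_sum (fun p _ => hpt p)
        _ = (∑ p : α × β, (f p.2).card) +
            ∑ p : α × β, (if p.2 = v ∧ p.1 ∈ s then 1 else 0) := Finset.sum_add_distrib
        _ = Fintype.card α * oir2 H + betaNum G := by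
            congr 1
            · rw [Fintype.sum_prod_type]
              show ∑ _x : α, ∑ y : β, (f y).card = _
              rw [hfw, Finset.sum_const, smul_eq_mul, Finset.card_univ]
            · rw [hsc, Fintype.sum_prod_type]
              show (∑ a : α, ∑ b : β, (if b = v ∧ a ∈ s then 1 else 0)) = s.card
              have : ∀ a : α, (∑ b : β, (if b = v ∧ a ∈ s then 1 else 0)) =
                  (if a ∈ s then 1 else 0) := by
                intro a
                by_cases ha : a ∈ s <;> simp [ha, Finset.sum_ite_eq']
              simp only [this]
              simp [Finset.sum_ite_mem, Finset.univ_inter]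
    exact_mod_cast hmain
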